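/- Assume IP is ergodic, shift-invariant, weakly elliptic, and P_0(lim X_n·ℓ = ∞) = 1. Then the set S = {ω : for all y ∈ Z^d, P_y^ω(inf_{m≥0} X_m·ℓ < 0) = 1} has IP(S) = 0, and moreover P_0^ω(inf_{m≥0} X_m·ℓ ≥ 0) > 0 for IP-a.e. ω. -/

import Mathlib

open MeasureTheory Filter Set
open scoped ENNReal

noncomputable section

abbrev Zd (d : ℕ) := Fin d → ℤ
abbrev Env (d : ℕ) := Zd d → Zd d → ℝ
abbrev Traj (d : ℕ) := ℕ → Zd d

/-- shift of the environment by `k`: `(T^k ω) x e = ω (k+x) e`. -/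
def shiftE {d : ℕ} (k : Zd d) (ω : Env d) : Env d := fun x e => ω (k + x) e

/-- the sup-norm ball of radius `M` in `ℤ^d`, the set of admissible jumps. -/
def box (d M : ℕ) : Finset (Zd d) := Finset.Icc (fun _ => -(M : ℤ)) (fun _ => (M : ℤ))

/-- scalar product `x · ℓ`. -/
def dotl {d : ℕ} (x : Zd d) (ℓ : Fin d → ℝ) : ℝ := ∑ i, (x i : ℝ) * ℓ i

/-- the local drift in direction `ℓ`: `D(ω)·ℓ`. -/
def driftl {d : ℕ} (M : ℕ) (ℓ : Fin d → ℝ) (ω : Env d) : ℝ :=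
  ∑ e ∈ box d M, dotl e ℓ * ω 0 e

/-- `μ` is the law of the quenched walk in environment `ω` started at `x0`:
a probability measure with `X_0 = x0` a.s., and the Markov property with
transition probabilities `ω i (j - i)` from `i` to `j`. -/
def IsWalk {d : ℕ} (μ : Measure (Traj d)) (ω : Env d) (x0 : Zd d) : Prop :=
  IsProbabilityMeasure μ ∧ μ {w | w 0 = x0} = 1 ∧
  ∀ (n : ℕ) (A : Set (Traj d)), MeasurableSet A →
    (∀ w w' : Traj d, (∀ m ≤ n, w m = w' m) → (w ∈ A ↔ w' ∈ A)) →
    ∀ i j : Zd d,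
      μ (A ∩ {w | w n = i ∧ w (n + 1) = j}) =
        ENNReal.ofReal (ω i (j - i)) * μ (A ∩ {w | w n = i})

/-- a nice environment of range `M`: nonnegative transition probabilities of
total mass one, supported on jumps of sup-norm at most `M`. -/
def GoodEnv {d : ℕ} (M : ℕ) (ω : Env d) : Prop :=
  (∀ x e, 0 ≤ ω x e) ∧ (∀ x, ∑ e ∈ box d M, ω x e = 1) ∧
  (∀ x e, e ∉ box d M → ω x e = 0)

/-- `U` is `M`-connected: there is a path of range `M` through all its points. -/
def MConn {d : ℕ} (M : ℕ) (U : Finset (Zd d)) : Prop :=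
  ∃ (n : ℕ) (p : ℕ → Zd d), (∀ i ≤ n, p i ∈ U) ∧
    (∀ i < n, p (i + 1) - p i ∈ box d M) ∧ (∀ x ∈ U, ∃ i ≤ n, p i = x)

/-- `E^ω_{x0}[Σ_{j=0}^{T_U} 1(X_j = x)]`, the expected number of visits to `x`
before exiting `U`. -/
def exitGreen {d : ℕ} (μ : Measure (Traj d)) (U : Set (Zd d)) (x : Zd d) : ℝ≥0∞ :=
  ∑' j : ℕ, μ {w | w j = x ∧ ∀ m < j, w m ∈ U}

/-- Kalikow's condition in direction `ℓ` with constant `ε`, for the annealed walk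
with environment distribution `IP` and quenched laws `P ω` (started at `0`). -/
def KalikowCond {d : ℕ} (IP : Measure (Env d)) (P : Env d → Measure (Traj d))
    (M : ℕ) (ℓ : Fin d → ℝ) (ε : ℝ) : Prop :=
  0 < ε ∧ ∀ U : Finset (Zd d), (0 : Zd d) ∈ U → MConn M U → ∀ x ∈ U,
    ε * ∫ ω, (exitGreen (P ω) (↑U) x).toReal ∂IP ≤
      ∫ ω, driftl M ℓ (shiftE x ω) * (exitGreen (P ω) (↑U) x).toReal ∂IP

/-- shift invariance of the environment measure. -/
def ShiftInv {d : ℕ} (IP : Measure (Env d)) : Prop :=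
  ∀ k : Zd d, Measure.map (shiftE k) IP = IP

/-- ergodicity of the environment measure under the shifts. -/
def ErgEnv {d : ℕ} (IP : Measure (Env d)) : Prop :=
  ShiftInv IP ∧ ∀ S : Set (Env d), MeasurableSet S →
    (∀ k : Zd d, shiftE k ⁻¹' S = S) → IP S = 0 ∨ IP S = 1

/-- invariance of a measure for the environment process viewed from the particle,
whose kernel is `π(ω, A) = Σ_{|e| ≤ M} π_{0e}(ω) 1_A(T^e ω)`. -/
def EnvInvariant {d : ℕ} (M : ℕ) (IPinf : Measure (Env d)) : Prop :=
  ∀ A : Set (Env d), MeasurableSet A →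
    ∫⁻ ω, ∑ e ∈ box d M, ENNReal.ofReal (ω 0 e) * A.indicator 1 (shiftE e ω) ∂IPinf
      = IPinf A

/-- weak ellipticity in direction `ℓ`: a.s. `π_{0j} > 0` for all unit vectors `j`
with `j·ℓ ≥ 0`. -/
def WeakElliptic {d : ℕ} (IP : Measure (Env d)) (ℓ : Fin d → ℝ) : Prop :=
  ∀ᵐ ω ∂IP, ∀ e : Zd d, (∑ i, (e i) * (e i)) = 1 → 0 ≤ dotl e ℓ → 0 < ω 0 e

/-- the half-space σ-field `S_k = σ(ω_x : x·ℓ ≥ k)`. -/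
def Sfield {d : ℕ} (ℓ : Fin d → ℝ) (k : ℝ) : MeasurableSpace (Env d) :=
  ⨆ x ∈ {x : Zd d | k ≤ dotl x ℓ}, MeasurableSpace.comap (fun ω : Env d => ω x) inferInstance


/-!
The probability that the walk started at `x` never drops below level `c` is an explicit function
`survivalProb ω ℓ x c` of the environment (the total mass of the walk killed below level `c`, in
the limit), hence measurable in `ω` and covariant under shifts. Let `A` be the event
`0 < survivalProb ω ℓ 0 0`. If the shifted environment `T_g ω` lies in `A` for a unit vector `g`
with `g · ℓ ≥ 0`, the walk in `ω` can step from `0` to `g` (weak ellipticity) and then stay above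
level `g · ℓ ≥ 0`, so `ω ∈ A`. As the shifts preserve `IP`, `A` is a.e. invariant under `T_{±g}`,
hence under all shifts, and by ergodicity `IP A ∈ {0, 1}`. If `IP A = 0`, then a.s. every level
the walk ever reaches is later undercut, so its trajectory has no minimum and cannot tend to
`+∞`, against transience. So `IP A = 1`, which is the second claim, and it implies the first.
-/

section Environment

variable {d : ℕ}

lemma dotl_add (x y : Zd d) (ℓ : Fin d → ℝ) : dotl (x + y) ℓ = dotl x ℓ + dotl y ℓ := by
  simp [dotl, add_mul, Finset.sum_add_distrib]

lemma dotl_zero (ℓ : Fin d → ℝ) : dotl (0 : Zd d) ℓ = 0 := by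
  simp [dotl]

lemma dotl_neg (x : Zd d) (ℓ : Fin d → ℝ) : dotl (-x) ℓ = -dotl x ℓ := by
  simp [dotl, Finset.sum_neg_distrib]

lemma dotl_single (i : Fin d) (ℓ : Fin d → ℝ) : dotl (Pi.single i 1) ℓ = ℓ i := by
  simp [dotl, Pi.single_apply]

lemma shiftE_shiftE (a b : Zd d) (ω : Env d) : shiftE b (shiftE a ω) = shiftE (a + b) ω := by
  funext x e
  simp only [shiftE, add_assoc]

lemma shiftE_zero : shiftE (0 : Zd d) = id := by
  funext ω x e
  simp [shiftE]

lemma measurable_shiftE (k : Zd d) : Measurable (shiftE k : Env d → Env d) :=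
  measurable_pi_lambda _ fun x => measurable_pi_lambda _ fun e =>
    (measurable_pi_apply e).comp (measurable_pi_apply (k + x))

lemma preimage_shiftE_add (a b : Zd d) (A : Set (Env d)) :
    shiftE (a + b) ⁻¹' A = shiftE a ⁻¹' (shiftE b ⁻¹' A) := by
  ext ω
  simp [shiftE_shiftE]

def killedLaw (ω : Env d) (ℓ : Fin d → ℝ) (x : Zd d) (c : ℝ) : ℕ → Zd d → ℝ≥0∞
  | 0 => fun j => if j = x ∧ c ≤ dotl j ℓ then 1 else 0
  | n + 1 => fun j => if c ≤ dotl j ℓ then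
      ∑' i, killedLaw ω ℓ x c n i * ENNReal.ofReal (ω i (j - i)) else 0

def survivalProb (ω : Env d) (ℓ : Fin d → ℝ) (x : Zd d) (c : ℝ) : ℝ≥0∞ :=
  ⨅ n, ∑' j, killedLaw ω ℓ x c n j

variable (ℓ : Fin d → ℝ)

lemma measurable_killedLaw (x : Zd d) (c : ℝ) (n : ℕ) (j : Zd d) :
    Measurable fun ω : Env d => killedLaw ω ℓ x c n j := by
  induction n generalizing j with
  | zero => exact measurable_const
  | succ n ih =>
    simp only [killedLaw]
    split_ifs
    · exact .tsum fun i => (ih i).mul <| ENNReal.measurable_ofReal.comp <|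
        (measurable_pi_apply (j - i)).comp (measurable_pi_apply i)
    · exact measurable_const

lemma measurable_survivalProb (x : Zd d) (c : ℝ) :
    Measurable fun ω : Env d => survivalProb ω ℓ x c :=
  .iInf fun n => .tsum fun j => measurable_killedLaw ℓ x c n j

lemma measurableSet_survivalProb_pos (x : Zd d) (c : ℝ) :
    MeasurableSet {ω : Env d | 0 < survivalProb ω ℓ x c} :=
  measurableSet_lt measurable_const (measurable_survivalProb ℓ x c)

lemma killedLaw_shiftE (y : Zd d) (ω : Env d) (x : Zd d) (c : ℝ) (n : ℕ) (j : Zd d) :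
    killedLaw (shiftE y ω) ℓ x c n j = killedLaw ω ℓ (y + x) (c + dotl y ℓ) n (y + j) := by
  have hlevel : ∀ j, c ≤ dotl j ℓ ↔ c + dotl y ℓ ≤ dotl (y + j) ℓ := fun j => by
    rw [dotl_add, add_comm (dotl y ℓ), add_le_add_iff_right]
  induction n generalizing j with
  | zero => simp only [killedLaw, add_right_inj, hlevel]
  | succ n ih =>
    simp only [killedLaw, ← hlevel]
    split_ifs
    · conv_rhs => rw [← (Equiv.addLeft y).tsum_eq]
      simp only [Equiv.coe_addLeft, ih, shiftE, add_sub_add_left_eq_sub]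
    · rfl

lemma survivalProb_shiftE (y : Zd d) (ω : Env d) (x : Zd d) (c : ℝ) :
    survivalProb (shiftE y ω) ℓ x c = survivalProb ω ℓ (y + x) (c + dotl y ℓ) := by
  refine iInf_congr fun n => ?_
  conv_rhs => rw [← (Equiv.addLeft y).tsum_eq]
  exact tsum_congr fun j => killedLaw_shiftE ℓ y ω x c n j

end Environment

section Shifts

variable {d : ℕ} {IP : Measure (Env d)} {A : Set (Env d)}

lemma ShiftInv.measurePreserving (h : ShiftInv IP) (k : Zd d) :
    MeasurePreserving (shiftE k) IP IP :=
  ⟨measurable_shiftE k, h k⟩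

lemma ShiftInv.preimage_ae_eq_of_ae_le [IsFiniteMeasure IP] (h : ShiftInv IP)
    (hA : MeasurableSet A) {k : Zd d} (hle : shiftE k ⁻¹' A ≤ᵐ[IP] A) :
    shiftE k ⁻¹' A =ᵐ[IP] A :=
  ae_eq_of_ae_subset_of_measure_ge hle
    ((h.measurePreserving k).measure_preimage hA.nullMeasurableSet).ge
    (measurable_shiftE k hA).nullMeasurableSet (measure_ne_top _ _)

lemma ShiftInv.preimage_add_ae_eq (h : ShiftInv IP) {a b : Zd d}
    (ha : shiftE a ⁻¹' A =ᵐ[IP] A) (hb : shiftE b ⁻¹' A =ᵐ[IP] A) :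
    shiftE (a + b) ⁻¹' A =ᵐ[IP] A := by
  rw [preimage_shiftE_add]
  exact ((h.measurePreserving a).quasiMeasurePreserving.preimage_ae_eq hb).trans ha

lemma ShiftInv.preimage_neg_ae_eq (h : ShiftInv IP) {a : Zd d}
    (ha : shiftE a ⁻¹' A =ᵐ[IP] A) : shiftE (-a) ⁻¹' A =ᵐ[IP] A := by
  have := (h.measurePreserving (-a)).quasiMeasurePreserving.preimage_ae_eq ha
  rw [← preimage_shiftE_add, neg_add_cancel, shiftE_zero, Set.preimage_id] at this
  exact this.symm

lemma ShiftInv.preimage_ae_eq_of_single (h : ShiftInv IP)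
    (hgen : ∀ i, shiftE (Pi.single i 1) ⁻¹' A =ᵐ[IP] A) (k : Zd d) :
    shiftE k ⁻¹' A =ᵐ[IP] A := by
  let H : AddSubgroup (Zd d) :=
    { carrier := {k | shiftE k ⁻¹' A =ᵐ[IP] A}
      add_mem' := h.preimage_add_ae_eq
      zero_mem' := by
        change shiftE 0 ⁻¹' A =ᵐ[IP] A
        rw [shiftE_zero, Set.preimage_id]
        rfl
      neg_mem' := h.preimage_neg_ae_eq }
  have hspan : Submodule.span ℤ (Set.range (Pi.basisFun ℤ (Fin d))) ≤ H.toIntSubmodule :=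
    Submodule.span_le.2 <| Set.range_subset_iff.2 fun i => by rw [Pi.basisFun_apply]; exact hgen i
  exact hspan ((Pi.basisFun ℤ (Fin d)).span_eq ▸ Submodule.mem_top)

lemma ErgEnv.measure_eq_zero_or_one (h : ErgEnv IP) (hA : MeasurableSet A)
    (hinv : ∀ k : Zd d, shiftE k ⁻¹' A =ᵐ[IP] A) : IP A = 0 ∨ IP A = 1 := by
  set A' := ⋂ k : Zd d, shiftE k ⁻¹' A
  have hA' : A' =ᵐ[IP] A := by
    have := Filter.EventuallyEq.countable_iInter hinv
    rwa [Set.iInter_const] at this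
  have hinv' : ∀ j : Zd d, shiftE j ⁻¹' A' = A' := fun j => by
    simp only [A', Set.preimage_iInter, ← preimage_shiftE_add]
    exact (Equiv.addLeft j).surjective.iInter_comp (fun k => shiftE k ⁻¹' A)
  rw [← measure_congr hA']
  exact h.2 A' (.iInter fun k => measurable_shiftE k hA) hinv'

end Shifts

section Walk

variable {d : ℕ}

def DeterminedUpTo (t : ℕ) (A : Set (Traj d)) : Prop :=
  ∀ w w' : Traj d, (∀ m ≤ t, w m = w' m) → (w ∈ A ↔ w' ∈ A)

lemma DeterminedUpTo.measurableSet {t : ℕ} {A : Set (Traj d)} (hA : DeterminedUpTo t A) :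
    MeasurableSet A := by
  set F : Traj d → (Fin (t + 1) → Zd d) := fun w i => w i
  have hF : Measurable F := measurable_pi_lambda _ fun i => measurable_pi_apply _
  have hA' : A = F ⁻¹' (F '' A) := by
    refine (Set.subset_preimage_image F A).antisymm ?_
    rintro w ⟨w', hw', hF⟩
    exact (hA w' w fun m hm => congrFun hF ⟨m, Nat.lt_succ_of_le hm⟩).1 hw'
  rw [hA']
  exact hF (F '' A).to_countable.measurableSet

lemma DeterminedUpTo.mono {t t' : ℕ} {A : Set (Traj d)} (hA : DeterminedUpTo t A)
    (htt' : t ≤ t') : DeterminedUpTo t' A :=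
  fun w w' h => hA w w' fun m hm => h m (hm.trans htt')

lemma DeterminedUpTo.inter {t : ℕ} {A B : Set (Traj d)} (hA : DeterminedUpTo t A)
    (hB : DeterminedUpTo t B) : DeterminedUpTo t (A ∩ B) :=
  fun w w' h => and_congr (hA w w' h) (hB w w' h)

lemma determinedUpTo_eval_eq {m t : ℕ} (hmt : m ≤ t) (x : Zd d) :
    DeterminedUpTo t {w : Traj d | w m = x} :=
  fun w w' h => by simp only [Set.mem_ofPred_eq, h m hmt]

lemma determinedUpTo_forall_le (t : ℕ) (p : ℕ → Zd d → Prop) :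
    DeterminedUpTo t {w : Traj d | ∀ m ≤ t, p m (w m)} :=
  fun w w' h => forall₂_congr fun m hm => by rw [h m hm]

lemma measurableSet_eval_eq (n : ℕ) (x : Zd d) : MeasurableSet {w : Traj d | w n = x} :=
  measurableSet_eq_fun (measurable_pi_apply n) measurable_const

lemma measurable_dotl_eval (ℓ : Fin d → ℝ) (n : ℕ) :
    Measurable fun w : Traj d => dotl (w n) ℓ :=
  (measurable_of_countable fun y : Zd d => dotl y ℓ).comp (measurable_pi_apply n)

lemma measurableSet_forall_le_dotl (ℓ : Fin d → ℝ) (c : ℝ) :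
    MeasurableSet {w : Traj d | ∀ m, c ≤ dotl (w m) ℓ} := by
  simp only [Set.ofPred_forall]
  exact .iInter fun m => measurableSet_le measurable_const (measurable_dotl_eval ℓ m)

lemma measure_exists_dotl_lt_eq_one_iff {μ : Measure (Traj d)} [IsProbabilityMeasure μ]
    (ℓ : Fin d → ℝ) (c : ℝ) :
    μ {w | ∃ m, dotl (w m) ℓ < c} = 1 ↔ μ {w | ∀ m, c ≤ dotl (w m) ℓ} = 0 := by
  have hcompl : {w : Traj d | ∃ m, dotl (w m) ℓ < c} = {w | ∀ m, c ≤ dotl (w m) ℓ}ᶜ := by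
    ext
    simp
  rw [hcompl, prob_compl_eq_one_iff (measurableSet_forall_le_dotl ℓ c)]

lemma measure_eq_tsum_inter_eval (μ : Measure (Traj d)) (E : Set (Traj d)) (n : ℕ) :
    μ E = ∑' x : Zd d, μ (E ∩ {w | w n = x}) := by
  calc μ E = μ.restrict E ((fun w : Traj d => w n) ⁻¹' Set.univ) := by simp
    _ = ∑' x : (Set.univ : Set (Zd d)), μ.restrict E ((fun w : Traj d => w n) ⁻¹' {↑x}) :=
        (tsum_measure_preimage_singleton Set.countable_univ
          fun x _ => measurableSet_eval_eq n x).symm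
    _ = ∑' x : Zd d, μ (E ∩ {w | w n = x}) := by
        rw [tsum_univ fun x : Zd d => μ.restrict E ((fun w : Traj d => w n) ⁻¹' {x})]
        refine tsum_congr fun x => ?_
        change μ.restrict E {w | w n = x} = _
        rw [Measure.restrict_apply (measurableSet_eval_eq n x), Set.inter_comm]

variable {μ : Measure (Traj d)} {ω : Env d} {x₀ : Zd d} (ℓ : Fin d → ℝ)

lemma DeterminedUpTo.inter_eval_inter_forall_le {t : ℕ} {A : Set (Traj d)}
    (hA : DeterminedUpTo t A) (x : Zd d) (c : ℝ) (n : ℕ) :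
    DeterminedUpTo (t + n) (A ∩ {w | w t = x} ∩ {w | ∀ m ≤ t + n, t ≤ m → c ≤ dotl (w m) ℓ}) :=
  ((hA.mono (Nat.le_add_right t n)).inter
    (determinedUpTo_eval_eq (Nat.le_add_right t n) x)).inter
    (determinedUpTo_forall_le (t + n) fun m y => t ≤ m → c ≤ dotl y ℓ)

lemma setOf_forall_le_add_succ_inter {t n : ℕ} {c : ℝ} {j : Zd d} (hj : c ≤ dotl j ℓ) :
    {w : Traj d | ∀ m ≤ t + (n + 1), t ≤ m → c ≤ dotl (w m) ℓ} ∩ {w | w (t + (n + 1)) = j} =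
      {w | ∀ m ≤ t + n, t ≤ m → c ≤ dotl (w m) ℓ} ∩ {w | w (t + n + 1) = j} := by
  ext w
  simp only [Set.mem_inter_iff, Set.mem_ofPred_eq, ← add_assoc]
  refine ⟨fun h => ⟨fun m hm => h.1 m (by omega), h.2⟩, fun h => ⟨fun m hm htm => ?_, h.2⟩⟩
  rcases Nat.lt_or_eq_of_le hm with hm | rfl
  · exact h.1 m (by omega) htm
  · rwa [h.2]

lemma IsWalk.measure_inter_killed (hw : IsWalk μ ω x₀) {t : ℕ} {A : Set (Traj d)}
    (hA : DeterminedUpTo t A) (x : Zd d) (c : ℝ) (n : ℕ) (j : Zd d) :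
    μ (A ∩ {w | w t = x} ∩ {w | ∀ m ≤ t + n, t ≤ m → c ≤ dotl (w m) ℓ} ∩
        {w | w (t + n) = j}) = μ (A ∩ {w | w t = x}) * killedLaw ω ℓ x c n j := by
  induction n generalizing j with
  | zero =>
    simp only [killedLaw, Nat.add_zero]
    split_ifs with hj
    · obtain ⟨rfl, hc⟩ := hj
      rw [mul_one]
      congr 1
      ext w
      simp only [Set.mem_inter_iff, Set.mem_ofPred_eq]
      refine ⟨fun h => h.1.1, fun h => ⟨⟨h, fun m hm htm => ?_⟩, h.2⟩⟩
      rwa [le_antisymm hm htm, h.2]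
    · rw [mul_zero]
      refine measure_mono_null (fun w hw => ?_) measure_empty
      obtain ⟨⟨⟨-, hx⟩, hc⟩, rfl⟩ := hw
      exact hj ⟨hx, hc t le_rfl le_rfl⟩
  | succ n ih =>
    set B := A ∩ {w | w t = x} ∩ {w | ∀ m ≤ t + n, t ≤ m → c ≤ dotl (w m) ℓ}
    have hB : DeterminedUpTo (t + n) B := hA.inter_eval_inter_forall_le ℓ x c n
    simp only [killedLaw]
    split_ifs with hj
    · have hset : A ∩ {w | w t = x} ∩ {w | ∀ m ≤ t + (n + 1), t ≤ m → c ≤ dotl (w m) ℓ} ∩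
          {w | w (t + (n + 1)) = j} = B ∩ {w | w (t + n + 1) = j} := by
        rw [Set.inter_assoc, setOf_forall_le_add_succ_inter ℓ hj, ← Set.inter_assoc]
      rw [hset, measure_eq_tsum_inter_eval μ _ (t + n), ← ENNReal.tsum_mul_left]
      refine tsum_congr fun i => ?_
      rw [Set.inter_assoc, Set.inter_comm {w : Traj d | _ = j}, ← Set.ofPred_and,
        hw.2.2 _ B hB.measurableSet hB i j, ih, mul_comm, mul_assoc]
    · rw [mul_zero]
      refine measure_mono_null (fun w hw => ?_) measure_empty
      obtain ⟨⟨-, hc⟩, rfl⟩ := hw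
      exact hj (hc _ le_rfl (Nat.le_add_right t _))

lemma IsWalk.measure_inter_survives (hw : IsWalk μ ω x₀) {t : ℕ} {A : Set (Traj d)}
    (hA : DeterminedUpTo t A) (x : Zd d) (c : ℝ) :
    μ (A ∩ {w | w t = x} ∩ {w | ∀ m, t ≤ m → c ≤ dotl (w m) ℓ}) =
      μ (A ∩ {w | w t = x}) * survivalProb ω ℓ x c := by
  have := hw.1
  set C : ℕ → Set (Traj d) := fun n =>
    A ∩ {w | w t = x} ∩ {w | ∀ m ≤ t + n, t ≤ m → c ≤ dotl (w m) ℓ}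
  have hC : ∀ n, DeterminedUpTo (t + n) (C n) := hA.inter_eval_inter_forall_le ℓ x c
  have hInter : A ∩ {w | w t = x} ∩ {w | ∀ m, t ≤ m → c ≤ dotl (w m) ℓ} = ⋂ n, C n := by
    ext w
    simp only [C, Set.mem_iInter, Set.mem_inter_iff, Set.mem_ofPred_eq]
    refine ⟨fun h n => ⟨h.1, fun m _ htm => h.2 m htm⟩, fun h => ⟨(h 0).1, fun m htm => ?_⟩⟩
    exact (h (m - t)).2 m (by omega) htm
  have hanti : Antitone C := fun n n' hnn' w hw =>
    ⟨hw.1, fun m hm htm => hw.2 m (hm.trans (by omega)) htm⟩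
  rw [hInter, hanti.measure_iInter (fun n => (hC n).measurableSet.nullMeasurableSet)
    ⟨0, measure_ne_top μ _⟩, survivalProb, ENNReal.mul_iInf fun h => absurd h (measure_ne_top μ _)]
  refine iInf_congr fun n => ?_
  rw [measure_eq_tsum_inter_eval μ _ (t + n), ← ENNReal.tsum_mul_left]
  exact tsum_congr fun j => hw.measure_inter_killed ℓ hA x c n j

lemma IsWalk.measure_forall_le (hw : IsWalk μ ω x₀) (c : ℝ) :
    μ {w | ∀ m, c ≤ dotl (w m) ℓ} = survivalProb ω ℓ x₀ c := by
  have := hw.1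
  have h := hw.measure_inter_survives ℓ (t := 0) (A := Set.univ) (fun _ _ _ => Iff.rfl) x₀ c
  simp only [Set.univ_inter, hw.2.1, one_mul, zero_le, true_imp_iff] at h
  rw [← h, Set.inter_comm, measure_inter_conull]
  exact (prob_compl_eq_zero_iff (measurableSet_eval_eq 0 x₀)).2 hw.2.1

lemma IsWalk.survivalProb_anti (hw : IsWalk μ ω x₀) {c c' : ℝ} (hcc' : c ≤ c') :
    survivalProb ω ℓ x₀ c' ≤ survivalProb ω ℓ x₀ c := by
  rw [← hw.measure_forall_le, ← hw.measure_forall_le]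
  exact measure_mono fun w hw m => hcc'.trans (hw m)

lemma IsWalk.ofReal_mul_survivalProb_le (hw : IsWalk μ ω x₀) {c : ℝ} (hc : c ≤ dotl x₀ ℓ)
    (e : Zd d) :
    ENNReal.ofReal (ω x₀ e) * survivalProb ω ℓ (x₀ + e) c ≤ survivalProb ω ℓ x₀ c := by
  have := hw.1
  have hstep : μ ({w | w 0 = x₀} ∩ {w | w 1 = x₀ + e}) = ENNReal.ofReal (ω x₀ e) := by
    have h := hw.2.2 0 Set.univ .univ (fun _ _ _ => Iff.rfl) x₀ (x₀ + e)
    rwa [Set.univ_inter, Set.univ_inter, hw.2.1, mul_one, add_sub_cancel_left] at h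
  calc ENNReal.ofReal (ω x₀ e) * survivalProb ω ℓ (x₀ + e) c
      = μ ({w | w 0 = x₀} ∩ {w | w 1 = x₀ + e} ∩ {w | ∀ m, 1 ≤ m → c ≤ dotl (w m) ℓ}) := by
        rw [← hstep, hw.measure_inter_survives ℓ (determinedUpTo_eval_eq zero_le_one x₀)]
    _ ≤ μ {w | ∀ m, c ≤ dotl (w m) ℓ} := by
        refine measure_mono fun w ⟨⟨h0, _⟩, h⟩ m => ?_
        rcases m with _ | m
        · rwa [h0]
        · exact h _ (Nat.succ_pos m)
    _ = survivalProb ω ℓ x₀ c := hw.measure_forall_le ℓ c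

lemma IsWalk.measure_tendsto_eq_zero (hw : IsWalk μ ω x₀)
    (h : ∀ x, survivalProb ω ℓ x (dotl x ℓ) = 0) :
    μ {w | Tendsto (fun n => dotl (w n) ℓ) atTop atTop} = 0 := by
  have := hw.1
  refine measure_mono_null (t := ⋃ (t : ℕ) (x : Zd d),
    {w | w t = x} ∩ {w | ∀ m, t ≤ m → dotl x ℓ ≤ dotl (w m) ℓ}) (fun w hw => ?_)
    (measure_iUnion_null fun t => measure_iUnion_null fun x => ?_)
  · -- a trajectory tending to `+∞` attains its minimum level
    rw [Set.mem_ofPred_eq, ← Nat.cofinite_eq_atTop] at hw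
    obtain ⟨t, ht⟩ := hw.exists_forall_le
    exact Set.mem_iUnion₂.2 ⟨t, w t, rfl, fun m _ => ht m⟩
  · simpa [h x] using
      hw.measure_inter_survives ℓ (t := t) (A := Set.univ) (fun _ _ _ => Iff.rfl) x (dotl x ℓ)

end Walk

section Backtracking

variable {d : ℕ} (ℓ : Fin d → ℝ)

lemma survivalProb_pos_of_shiftE {μ₀ μ : Measure (Traj d)} {ω : Env d} {g : Zd d}
    (hw₀ : IsWalk μ₀ ω 0) (hw : IsWalk μ ω g) (hωg : 0 < ω 0 g) (hgℓ : 0 ≤ dotl g ℓ)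
    (h : 0 < survivalProb (shiftE g ω) ℓ 0 0) : 0 < survivalProb ω ℓ 0 0 := by
  rw [survivalProb_shiftE, add_zero, zero_add] at h
  have hg : 0 < survivalProb ω ℓ (0 + g) 0 := by
    rw [zero_add]
    exact h.trans_le (hw.survivalProb_anti ℓ hgℓ)
  exact (ENNReal.mul_pos (ENNReal.ofReal_pos.2 hωg).ne' hg.ne').trans_le
    (hw₀.ofReal_mul_survivalProb_le ℓ (dotl_zero ℓ).ge g)

variable {IP : Measure (Env d)} {P : Env d → Zd d → Measure (Traj d)}

lemma preimage_shiftE_ae_le_of_unit (hP : ∀ᵐ ω ∂IP, ∀ y, IsWalk (P ω y) ω y)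
    (hell : WeakElliptic IP ℓ) {g : Zd d} (hg : ∑ i, g i * g i = 1) (hgℓ : 0 ≤ dotl g ℓ) :
    shiftE g ⁻¹' {ω | 0 < survivalProb ω ℓ 0 0} ≤ᵐ[IP] {ω | 0 < survivalProb ω ℓ 0 0} := by
  filter_upwards [hP, hell] with ω hPω hellω
  exact survivalProb_pos_of_shiftE ℓ (hPω 0) (hPω g) (hellω g hg hgℓ) hgℓ

lemma preimage_shiftE_survivalProb_pos_ae_eq [IsFiniteMeasure IP] (hsi : ShiftInv IP)
    (hP : ∀ᵐ ω ∂IP, ∀ y, IsWalk (P ω y) ω y) (hell : WeakElliptic IP ℓ) (k : Zd d) :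
    shiftE k ⁻¹' {ω | 0 < survivalProb ω ℓ 0 0} =ᵐ[IP] {ω | 0 < survivalProb ω ℓ 0 0} := by
  have hA := measurableSet_survivalProb_pos ℓ 0 0
  refine hsi.preimage_ae_eq_of_single (fun i => ?_) k
  have hunit : ∑ j, (Pi.single i 1 : Zd d) j * (Pi.single i 1 : Zd d) j = 1 := by
    simp [Pi.single_apply]
  by_cases hℓi : 0 ≤ ℓ i
  · exact hsi.preimage_ae_eq_of_ae_le hA <|
      preimage_shiftE_ae_le_of_unit ℓ hP hell hunit (by rwa [dotl_single])
  · have h := hsi.preimage_ae_eq_of_ae_le hA <|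
      preimage_shiftE_ae_le_of_unit ℓ hP hell (g := -Pi.single i 1) (by simpa using hunit)
        (by rw [dotl_neg, dotl_single]; linarith)
    simpa using hsi.preimage_neg_ae_eq h

lemma ae_survivalProb_eq_zero (hsi : ShiftInv IP)
    (h : IP {ω | 0 < survivalProb ω ℓ 0 0} = 0) :
    ∀ᵐ ω ∂IP, ∀ x, survivalProb ω ℓ x (dotl x ℓ) = 0 := by
  refine ae_all_iff.2 fun x => ?_
  have hx := (hsi.measurePreserving x).measure_preimage
    (measurableSet_survivalProb_pos ℓ 0 0).nullMeasurableSet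
  rw [h] at hx
  refine measure_mono_null (fun ω hω => ?_) hx
  simpa [survivalProb_shiftE, pos_iff_ne_zero] using hω

end Backtracking

theorem no_backtracking_general {d : ℕ} (ℓ : Fin d → ℝ)
    (IP : Measure (Env d)) [IsProbabilityMeasure IP]
    (herg : ErgEnv IP)
    (hell : WeakElliptic IP ℓ)
    (P : Env d → Zd d → Measure (Traj d))
    (hP : ∀ᵐ ω ∂IP, ∀ y : Zd d, IsWalk (P ω y) ω y)
    (ann : Measure (Traj d))
    (hann : ∀ S : Set (Traj d), MeasurableSet S → ann S = ∫⁻ ω, P ω 0 S ∂IP)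
    (htrans : ann {w | Tendsto (fun n => dotl (w n) ℓ) atTop atTop} = 1) :
    IP {ω | ∀ y : Zd d, P ω y {w | ∃ m : ℕ, dotl (w m) ℓ < 0} = 1} = 0 ∧
    ∀ᵐ ω ∂IP, 0 < P ω 0 {w | ∀ m : ℕ, 0 ≤ dotl (w m) ℓ} := by
  set A := {ω : Env d | 0 < survivalProb ω ℓ 0 0}
  have hA : MeasurableSet A := measurableSet_survivalProb_pos ℓ 0 0
  have hA1 : IP A = 1 := by
    refine (herg.measure_eq_zero_or_one hA
      (preimage_shiftE_survivalProb_pos_ae_eq ℓ herg.1 hP hell)).resolve_left fun hA0 => ?_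
    have hnull : ∀ᵐ ω ∂IP, P ω 0 {w | Tendsto (fun n => dotl (w n) ℓ) atTop atTop} = 0 := by
      filter_upwards [ae_survivalProb_eq_zero ℓ herg.1 hA0, hP] with ω hω hPω
      exact (hPω 0).measure_tendsto_eq_zero ℓ hω
    rw [hann _ (measurableSet_tendsto _ fun n => measurable_dotl_eval ℓ n),
      lintegral_congr_ae hnull, lintegral_zero] at htrans
    exact zero_ne_one htrans
  have hpos : ∀ᵐ ω ∂IP, 0 < P ω 0 {w | ∀ m : ℕ, 0 ≤ dotl (w m) ℓ} := by
    filter_upwards [mem_ae_iff.2 ((prob_compl_eq_zero_iff hA).2 hA1), hP] with ω hω hPω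
    rwa [(hPω 0).measure_forall_le]
  refine ⟨measure_eq_zero_iff_ae_notMem.2 ?_, hpos⟩
  filter_upwards [hpos, hP] with ω hω hPω hS
  have := (hPω 0).1
  exact hω.ne' ((measure_exists_dotl_lt_eq_one_iff ℓ 0).1 (hS 0))

/-- if `IP` is ergodic, shift invariant, weakly elliptic, and the
walk is transient in direction `ℓ`, then the set
`S = {ω : ∀ y, P_y^ω(inf_m X_m·ℓ < 0) = 1}` is `IP`-null, and for `IP`-a.e. `ω`,
`P_0^ω(inf_m X_m·ℓ ≥ 0) > 0`. -/
theorem no_backtracking {d M : ℕ} (ℓ : Fin d → ℝ)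
    (IP : Measure (Env d)) [IsProbabilityMeasure IP]
    (herg : ErgEnv IP) (hgood : ∀ᵐ ω ∂IP, GoodEnv M ω)
    (hell : WeakElliptic IP ℓ)
    (P : Env d → Zd d → Measure (Traj d))
    (hP : ∀ᵐ ω ∂IP, ∀ y : Zd d, IsWalk (P ω y) ω y)
    (ann : Measure (Traj d))
    (hann : ∀ S : Set (Traj d), MeasurableSet S → ann S = ∫⁻ ω, P ω 0 S ∂IP)
    (htrans : ann {w | Tendsto (fun n => dotl (w n) ℓ) atTop atTop} = 1) :
    IP {ω | ∀ y : Zd d, P ω y {w | ∃ m : ℕ, dotl (w m) ℓ < 0} = 1} = 0 ∧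
    ∀ᵐ ω ∂IP, 0 < P ω 0 {w | ∀ m : ℕ, 0 ≤ dotl (w m) ℓ} :=
  no_backtracking_general ℓ IP herg hell P hP ann hann htrans
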